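/- arXiv:1301.6598 — 4 statements merged into one kernel-verified Lean document; each statement's English description precedes it below -/
import Mathlib

section
/- Let K be a field and f₁,...,fₙ ∈ K[[x]] be formal power series linearly independent over K. Then there exists an invertible n×n matrix A over K such that the power series g₁,...,gₙ defined by [g₁ ⋯ gₙ] = [f₁ ⋯ fₙ]·A are all nonzero and have pairwise distinct orders (the order of a nonzero power series is the smallest exponent with nonzero coefficient). -/
/-!
Reading off the coefficients at the orders attained in `V = span f` is injective on `V`, so at
least `dim V = n` orders are attained. One element of `V` of each of `n` such orders gives a family
with distinct orders; it is linearly independent (in a nontrivial combination the term of least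
order survives), hence a basis of `V`, and `A` is the change-of-basis matrix.
-/

open PowerSeries Function Submodule Module

theorem exists_isUnit_det_sum_smul_eq {K M ι : Type*} [Field K] [AddCommGroup M] [Module K M]
    [Fintype ι] [DecidableEq ι] {f g : ι → M} (hf : LinearIndependent K f)
    (hg : LinearIndependent K g) (hgf : ∀ j, g j ∈ span K (Set.range f)) :
    ∃ A : Matrix ι ι K, IsUnit A.det ∧ ∀ j, ∑ i, A i j • f i = g j := by
  have : FiniteDimensional K (span K (Set.range f)) := .span_of_finite K (Set.finite_range f)
  let bf := Basis.span hf
  let g' : ι → span K (Set.range f) := fun j => ⟨g j, hgf j⟩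
  have hg' : LinearIndependent K g' := .of_comp (span K (Set.range f)).subtype hg
  let bg := basisOfLinearIndependentOfCardEqFinrank' g' hg' (finrank_span_eq_card hf).symm
  refine ⟨bf.toMatrix bg, Matrix.isUnit_det_of_right_inverse (bf.toMatrix_mul_toMatrix_flip bg),
    fun j => ?_⟩
  simpa [bf, bg, g', Basis.span_apply] using congrArg Subtype.val (bf.sum_toMatrix_smul_self bg j)

namespace PowerSeries

theorem linearIndependent_of_injective_order {R ι : Type*} [Ring R] [NoZeroDivisors R]
    {g : ι → R⟦X⟧} (hg : ∀ i, g i ≠ 0) (hinj : Injective fun i => (g i).order) :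
    LinearIndependent R g := by
  classical
  rw [linearIndependent_iff']
  intro s c hc
  by_contra! hsupp
  obtain ⟨i₀, hi₀, hmin⟩ := (s.filter (c · ≠ 0)).exists_min_image (fun i => (g i).order)
    (by simpa [Finset.filter_nonempty_iff] using hsupp)
  rw [Finset.mem_filter] at hi₀
  set d := (g i₀).order.toNat
  have hd : (d : ℕ∞) = (g i₀).order := coe_toNat_order (hg i₀)
  -- only the term of least order contributes to the coefficient of `X ^ d`
  have hcoeff : coeff d (∑ i ∈ s, c i • g i) = c i₀ * coeff d (g i₀) := by
    rw [map_sum, Finset.sum_eq_single_of_mem i₀ hi₀.1, map_smul, smul_eq_mul]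
    intro i hi hne
    by_cases hci : c i = 0
    · simp [hci]
    · have hlt : (d : ℕ∞) < (g i).order :=
        hd ▸ (hmin i (by simp [hi, hci])).lt_of_ne (hinj.ne hne.symm)
      rw [map_smul, coeff_of_lt_order d hlt, smul_zero]
  rw [hc, map_zero] at hcoeff
  exact mul_ne_zero hi₀.2 (coeff_order (hg i₀)) hcoeff.symm

def orderSet {R : Type*} [Semiring R] (V : Submodule R R⟦X⟧) : Set ℕ :=
  {d | ∃ w ∈ V, w.order = d}

theorem eq_zero_of_coeff_orderSet_eq_zero {R : Type*} [Semiring R] {V : Submodule R R⟦X⟧}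
    {w : R⟦X⟧} (hw : w ∈ V) (h : ∀ d ∈ orderSet V, coeff d w = 0) : w = 0 := by
  by_contra hw0
  exact coeff_order hw0 (h _ ⟨w, hw, (coe_toNat_order hw0).symm⟩)

section Field

variable {K : Type*} [Field K]

theorem finrank_le_card_orderSet {V : Submodule K K⟦X⟧} (hS : (orderSet V).Finite) :
    finrank K V ≤ hS.toFinset.card := by
  let Φ : V →ₗ[K] (hS.toFinset → K) := LinearMap.pi fun d => (coeff d.1).comp V.subtype
  have hΦ : Injective Φ := by
    refine (injective_iff_map_eq_zero Φ).2 fun w hw => Subtype.ext ?_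
    refine eq_zero_of_coeff_orderSet_eq_zero w.2 fun d hd => ?_
    simpa [Φ] using congrFun hw ⟨d, hS.mem_toFinset.2 hd⟩
  simpa using LinearMap.finrank_le_finrank_of_injective hΦ

theorem exists_finset_subset_orderSet_card_eq {V : Submodule K K⟦X⟧} {n : ℕ}
    (hn : n ≤ finrank K V) : ∃ T : Finset ℕ, ↑T ⊆ orderSet V ∧ T.card = n := by
  rcases (orderSet V).finite_or_infinite with hS | hS
  · obtain ⟨T, hT, rfl⟩ := Finset.exists_subset_card_eq (hn.trans (finrank_le_card_orderSet hS))
    exact ⟨T, by simpa using hT, rfl⟩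
  · exact hS.exists_subset_card_eq n

theorem exists_injective_order {V : Submodule K K⟦X⟧} {n : ℕ} (hn : n ≤ finrank K V) :
    ∃ g : Fin n → K⟦X⟧, (∀ i, g i ∈ V) ∧ (∀ i, g i ≠ 0) ∧ Injective fun i => (g i).order := by
  obtain ⟨T, hTV, rfl⟩ := exists_finset_subset_orderSet_card_eq hn
  choose w hwV hw using fun d : T => hTV d.2
  refine ⟨fun i => w (T.equivFin.symm i), fun i => hwV _, fun i => ?_, fun i j hij => ?_⟩
  · rw [ne_eq, ← order_eq_top, hw]
    exact ENat.natCast_ne_top _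
  · simpa [hw, Subtype.ext_iff] using hij

end Field

end PowerSeries

theorem exists_matrix_distinct_orders {K : Type*} [Field K] (n : ℕ)
    (f : Fin n → PowerSeries K) (hf : LinearIndependent K f) :
    ∃ A : Matrix (Fin n) (Fin n) K, IsUnit A.det ∧
      (∀ j, (∑ i, A i j • f i) ≠ 0) ∧
      Function.Injective fun j => (∑ i, A i j • f i).order := by
  have hrank : finrank K (span K (Set.range f)) = n := by
    rw [finrank_span_eq_card hf, Fintype.card_fin]
  obtain ⟨g, hgV, hg0, hginj⟩ := exists_injective_order hrank.ge
  obtain ⟨A, hA, hAg⟩ :=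
    exists_isUnit_det_sum_smul_eq hf (linearIndependent_of_injective_order hg0 hginj) hgV
  refine ⟨A, hA, fun j => hAg j ▸ hg0 j, ?_⟩
  simpa only [hAg] using hginj
end

section
/- Let K be a field of characteristic zero. If g₁,...,gₙ ∈ K[[x]] are nonzero formal power series with pairwise distinct orders, then their Wronskian W(g₁,...,gₙ) is a nonzero power series. -/
/-!
Let `dⱼ` be the order of `gⱼ` and `cⱼ` its lowest coefficient. Multiplying row `i` of the
Wronskian matrix by `Xⁱ` turns `Dⁱ` into the Euler-type operator `Xⁱ Dⁱ`, which multiplies the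
coefficient of `Xᵐ` by the falling factorial `m(m-1)⋯(m-i+1)`. Every entry of column `j` is then
divisible by `X^dⱼ`, so the coefficient of `X^(∑ dⱼ)` in the determinant is the determinant of the
lowest coefficients, `∏ cⱼ · det (dⱼ(dⱼ-1)⋯(dⱼ-i+1))ᵢⱼ`. The falling factorials are monic
polynomials of degree `i` in `dⱼ`, so that determinant is the Vandermonde determinant of the
distinct numbers `dⱼ`, which is nonzero in characteristic zero.
-/

open PowerSeries

namespace PowerSeries

variable {R : Type*}

theorem coeff_X_pow_mul_iterate_derivative [CommSemiring R] (f : R⟦X⟧) (i m : ℕ) :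
    coeff m (X ^ i * (d⁄dX R)^[i] f) = m.descFactorial i * coeff m f := by
  rcases lt_or_ge m i with hm | hm
  · rw [coeff_X_pow_mul', if_neg hm.not_ge, Nat.descFactorial_eq_zero_iff_lt.mpr hm,
      Nat.cast_zero, zero_mul]
  · obtain ⟨k, rfl⟩ := Nat.exists_eq_add_of_le' hm
    rw [coeff_X_pow_mul, coeff_iterate_derivative, Nat.add_descFactorial_eq_ascFactorial]

theorem X_pow_dvd_X_pow_mul_iterate_derivative [CommSemiring R] {f : R⟦X⟧} {k : ℕ}
    (hf : X ^ k ∣ f) (i : ℕ) : X ^ k ∣ X ^ i * (d⁄dX R)^[i] f := by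
  rw [X_pow_dvd_iff] at hf ⊢
  intro m hm
  rw [coeff_X_pow_mul_iterate_derivative, hf m hm, mul_zero]

theorem coeff_sum_det_of_X_pow_dvd [CommRing R] {ι : Type*} [Fintype ι] [DecidableEq ι]
    (M : Matrix ι ι R⟦X⟧) (d : ι → ℕ) (hM : ∀ i j, X ^ d j ∣ M i j) :
    coeff (∑ j, d j) M.det = (Matrix.of fun i j => coeff (d j) (M i j)).det := by
  choose N hN using hM
  have hMN : M = Matrix.of fun i j => X ^ d j * N i j := Matrix.ext hN
  have hdet : M.det = X ^ (∑ j, d j) * (Matrix.of N).det := by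
    rw [hMN, ← Finset.prod_pow_eq_pow_sum]
    exact Matrix.det_mul_row _ (Matrix.of N)
  have hentry : ∀ i j, coeff (d j) (M i j) = constantCoeff (N i j) := fun i j => by
    simpa [hN] using coeff_X_pow_mul (N i j) (d j) 0
  have hconst := coeff_X_pow_mul (Matrix.of N).det (∑ j, d j) 0
  rw [zero_add, coeff_zero_eq_constantCoeff_apply, RingHom.map_det] at hconst
  rw [hdet, hconst]
  congr 1
  ext i j
  simp [hentry]

end PowerSeries

namespace Matrix

theorem det_of_descFactorial_ne_zero {R : Type*} [CommRing R] [IsDomain R] [CharZero R] {n : ℕ}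
    {d : Fin n → ℕ} (hd : Function.Injective d) :
    (of fun i j : Fin n => ((d j).descFactorial i : R)).det ≠ 0 := by
  have h := det_eval_matrixOfPolynomials_eq_det_vandermonde (fun j => (d j : R))
    (fun i => descPochhammer R i) (fun i => descPochhammer_natDegree R i)
    (fun i => monic_descPochhammer R i)
  simp only [descPochhammer_eval_eq_descFactorial] at h
  rw [← det_transpose]
  convert det_vandermonde_ne_zero_iff.mpr ((Nat.cast_injective (R := R)).comp hd) using 1
  exact h.symm

end Matrix

theorem wronskian_ne_zero_of_distinct_orders {K : Type*} [Field K] [CharZero K]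
    (n : ℕ) (g : Fin n → PowerSeries K) (hg : ∀ j, g j ≠ 0)
    (hord : Function.Injective fun j => (g j).order) :
    Matrix.det (Matrix.of fun i j : Fin n =>
        (fun h => PowerSeries.derivative K h)^[(i : ℕ)] (g j)) ≠ 0 := by
  set d : Fin n → ℕ := fun j => (g j).order.toNat
  have hd : Function.Injective d := fun a b hab => hord <| by
    change (g a).order = (g b).order
    rw [← coe_toNat_order (hg a), ← coe_toNat_order (hg b)]
    exact congrArg _ hab
  have hlead : ∏ j, coeff (d j) (g j) ≠ 0 :=
    Finset.prod_ne_zero_iff.mpr fun j _ => coeff_order (hg j)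
  set M : Matrix (Fin n) (Fin n) K⟦X⟧ := .of fun i j => X ^ (i : ℕ) * (d⁄dX K)^[i] (g j)
  have hrows : M.det
      = X ^ (∑ i : Fin n, (i : ℕ)) *
        (Matrix.of fun i j : Fin n => (fun h => d⁄dX K h)^[i] (g j)).det := by
    rw [← Finset.prod_pow_eq_pow_sum]
    exact Matrix.det_mul_column _ _
  have hlowest : coeff (∑ j, d j) M.det
      = (∏ j, coeff (d j) (g j)) *
        (Matrix.of fun i j : Fin n => ((d j).descFactorial i : K)).det := by
    rw [coeff_sum_det_of_X_pow_dvd M d fun i j =>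
      X_pow_dvd_X_pow_mul_iterate_derivative X_pow_order_dvd i, ← Matrix.det_mul_row]
    simp only [M, Matrix.of_apply, coeff_X_pow_mul_iterate_derivative, mul_comm]
  intro hW
  rw [hrows, hW, mul_zero, map_zero] at hlowest
  exact mul_ne_zero hlead (Matrix.det_of_descFactorial_ne_zero hd) hlowest.symm
end

section
/- Let K be a field of characteristic zero and let α₁,...,αₙ ∈ ℕ^m be multi-indices. If every 'generalized Vandermonde' determinant det(αⱼ^{𝐣_{i−1}})_{1≤i,j≤n} (rows indexed by multi-indices 𝐣₀=0, 𝐣₁,...,𝐣_{n−1} with |𝐣_s| ≤ s, and α^𝐣 = α₁^{j₁}⋯α_m^{j_m}) vanishes, then the αᵢ are not pairwise distinct. -/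
open Finset

section Aux

set_option linter.unusedSectionVars false

variable {K : Type*} [Field K] [CharZero K] {m n : ℕ}

private def gv (K : Type*) [Field K] {m n : ℕ} (α : Fin n → (Fin m → ℕ)) (J : Fin m → ℕ) : Fin n → K :=
  fun j => ∏ k, (α j k : K) ^ J k

private lemma gv_bump (α : Fin n → (Fin m → ℕ)) (J : Fin m → ℕ) (k : Fin m) :
    (fun j => (α j k : K) * gv K α J j) =
      gv K α (fun k' => J k' + if k' = k then 1 else 0) := by
  funext j
  simp only [gv, pow_add]
  rw [Finset.prod_mul_distrib]
  have : ∏ k', (α j k' : K) ^ (if k' = k then 1 else 0) = (α j k : K) := by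
    have h : ∀ k', (α j k' : K) ^ (if k' = k then 1 else 0)
        = (if k' = k then (α j k' : K) else 1) := by
      intro k'; split <;> simp
    rw [Finset.prod_congr rfl fun k' _ => h k', Finset.prod_ite_eq' univ k]
    simp
  rw [this, mul_comm]

private lemma sum_bump (J : Fin m → ℕ) (k : Fin m) :
    ∑ k', (J k' + if k' = k then 1 else 0) = (∑ k', J k') + 1 := by
  rw [Finset.sum_add_distrib, Finset.sum_ite_eq' univ k]
  simp

private lemma mul_mem_span (c : Fin n → K) (S : Set (Fin n → K))
    (hS : ∀ v ∈ S, (fun j => c j * v j) ∈ Submodule.span K S) :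
    ∀ v ∈ Submodule.span K S, (fun j => c j * v j) ∈ Submodule.span K S := by
  intro v hv
  induction hv using Submodule.span_induction with
  | mem x hx => exact hS x hx
  | zero =>
      convert Submodule.zero_mem (Submodule.span K S) using 1
      funext j; simp
  | add x y hx hy ihx ihy =>
      convert Submodule.add_mem _ ihx ihy using 1
      funext j; simp [mul_add]
  | smul a x hx ih =>
      convert Submodule.smul_mem _ a ih using 1
      funext j; simp [Pi.smul_apply, smul_eq_mul]; ring

private lemma gv_span_top (α : Fin n → (Fin m → ℕ)) (hα : Function.Injective α) :
    Submodule.span K (Set.range (gv K α : (Fin m → ℕ) → Fin n → K)) = ⊤ := by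
  classical
  set S := Submodule.span K (Set.range (gv K α : (Fin m → ℕ) → Fin n → K)) with hSdef
  have hmul : ∀ (k : Fin m), ∀ v ∈ S, (fun j => (α j k : K) * v j) ∈ S := by
    intro k
    apply mul_mem_span
    rintro v ⟨J, rfl⟩
    rw [gv_bump]
    exact Submodule.subset_span ⟨_, rfl⟩
  have hpoly : ∀ p : MvPolynomial (Fin m) K,
      (fun j => MvPolynomial.eval (fun k => (α j k : K)) p) ∈ S := by
    intro p
    induction p using MvPolynomial.induction_on with
    | C a =>
        have h1 : (gv K α 0 : Fin n → K) ∈ S := Submodule.subset_span ⟨0, rfl⟩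
        convert Submodule.smul_mem _ a h1 using 1
        funext j; simp [gv]
    | add p q hp hq =>
        convert Submodule.add_mem _ hp hq using 1
        funext j; simp
    | mul_X p k hp =>
        convert hmul k _ hp using 1
        funext j; simp [mul_comm]
  rw [eq_top_iff, ← (Pi.basisFun K (Fin n)).span_eq, Submodule.span_le]
  rintro _ ⟨j0, rfl⟩
  have hk : ∀ i : Fin n, i ≠ j0 → ∃ k, α i k ≠ α j0 k := by
    intro i hi
    by_contra hcon
    push_neg at hcon
    exact hi (hα (funext hcon))
  choose kk hkk using hk
  set T := (univ.erase j0).attach with hT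
  set p : MvPolynomial (Fin m) K :=
    ∏ i ∈ T, (MvPolynomial.X (kk i.1 (Finset.ne_of_mem_erase i.2))
      - MvPolynomial.C ((α i.1 (kk i.1 (Finset.ne_of_mem_erase i.2)) : K))) with hp
  set f : Fin n → K := fun j => MvPolynomial.eval (fun k => (α j k : K)) p with hf
  have hfval : ∀ j, f j = ∏ i ∈ T,
      ((α j (kk i.1 (Finset.ne_of_mem_erase i.2)) : K)
        - (α i.1 (kk i.1 (Finset.ne_of_mem_erase i.2)) : K)) := by
    intro j
    simp [hf, hp, MvPolynomial.eval_prod]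
  have hfj0 : f j0 ≠ 0 := by
    rw [hfval]
    apply Finset.prod_ne_zero_iff.2
    intro i _
    have := hkk i.1 (Finset.ne_of_mem_erase i.2)
    intro hz
    apply this
    exact_mod_cast (sub_eq_zero.1 hz).symm
  have hfne : ∀ j, j ≠ j0 → f j = 0 := by
    intro j hj
    rw [hfval]
    refine Finset.prod_eq_zero (Finset.mem_attach _ ⟨j, Finset.mem_erase.2 ⟨hj, Finset.mem_univ j⟩⟩) ?_
    simp
  have : Pi.basisFun K (Fin n) j0 = (f j0)⁻¹ • f := by
    funext j
    by_cases hj : j = j0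
    · subst hj
      simp [Pi.basisFun_apply, Pi.single_apply, inv_mul_cancel₀ hfj0]
    · simp [Pi.basisFun_apply, Pi.single_apply, hj, hfne j hj]
  rw [this]
  exact Submodule.smul_mem _ _ (hpoly p)

private lemma gv_greedy (α : Fin n → (Fin m → ℕ)) (hα : Function.Injective α) :
    ∀ s : ℕ, s ≤ n → ∃ J : Fin s → (Fin m → ℕ),
      (∀ i : Fin s, (∑ k, J i k) ≤ (i : ℕ)) ∧
      LinearIndependent K (fun i => gv K α (J i)) := by
  intro s
  induction s with
  | zero => exact fun _ => ⟨fun i => 0, fun i => i.elim0, linearIndependent_empty_type⟩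
  | succ s ih =>
    intro hs
    obtain ⟨J, hJd, hJi⟩ := ih (Nat.le_of_succ_le hs)
    set W := Submodule.span K (Set.range fun i : Fin s => gv K α (J i)) with hW
    have hex : ∃ Jn : Fin m → ℕ, (∑ k, Jn k) ≤ s ∧ (gv K α Jn : Fin n → K) ∉ W := by
      by_contra hcon
      push_neg at hcon
      -- W is closed under coordinate multiplication
      have hmul : ∀ (k : Fin m), ∀ v ∈ W, (fun j => (α j k : K) * v j) ∈ W := by
        intro k
        apply mul_mem_span
        rintro v ⟨i, rfl⟩
        rw [gv_bump]
        apply hcon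
        rw [sum_bump]
        exact Nat.succ_le_of_lt (lt_of_le_of_lt (hJd i) i.isLt)
      -- all gv vectors are in W
      have hall : ∀ t : ℕ, ∀ Jn : Fin m → ℕ, (∑ k, Jn k) ≤ s + t → (gv K α Jn : Fin n → K) ∈ W := by
        intro t
        induction t with
        | zero => exact hcon
        | succ t iht =>
          intro Jn hJn
          rcases le_or_gt (∑ k, Jn k) (s + t) with h' | h'
          · exact iht Jn h'
          · have hpos : 0 < ∑ k, Jn k := lt_of_le_of_lt (Nat.zero_le _) h'
            have : ∃ k, Jn k ≠ 0 := by
              by_contra hz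
              push_neg at hz
              simp [hz] at hpos
            obtain ⟨k, hk⟩ := this
            set J' := Function.update Jn k (Jn k - 1) with hJ'
            have heq : Jn = fun k' => J' k' + if k' = k then 1 else 0 := by
              funext k'
              by_cases hk' : k' = k
              · subst hk'
                simp [hJ', Function.update_self, Nat.sub_add_cancel (Nat.one_le_iff_ne_zero.2 hk)]
              · simp [hJ', Function.update_of_ne hk', hk']
            have hsum : (∑ k', J' k') + 1 = ∑ k', Jn k' := by
              conv_rhs => rw [heq]
              rw [sum_bump]
            have hle : (∑ k', J' k') ≤ s + t := by omega
            have := hmul k _ (iht J' hle)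
            rw [gv_bump, ← heq] at this
            exact this
      have htop : (⊤ : Submodule K (Fin n → K)) ≤ W := by
        rw [← gv_span_top α hα, Submodule.span_le]
        rintro _ ⟨Jn, rfl⟩
        exact hall (∑ k, Jn k) Jn (Nat.le_add_left _ _)
      have hfr := finrank_le_of_span_eq_top (v := fun i : Fin s => gv K α (J i))
        (top_unique htop)
      rw [Module.finrank_fin_fun, Fintype.card_fin] at hfr
      omega
    obtain ⟨Jn, hJnd, hJn⟩ := hex
    refine ⟨Fin.snoc J Jn, ?_, ?_⟩
    · intro i
      refine Fin.lastCases ?_ ?_ i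
      · simpa using hJnd
      · intro i
        simpa using hJd i
    · have : (fun i : Fin (s + 1) => gv K α ((Fin.snoc J Jn : Fin (s+1) → Fin m → ℕ) i) : Fin (s+1) → Fin n → K)
          = Fin.snoc (fun i => gv K α (J i)) (gv K α Jn) := by
        funext i
        refine Fin.lastCases ?_ ?_ i
        · simp
        · intro i; simp
      rw [this, linearIndependent_fin_snoc]
      exact ⟨hJi, hJn⟩

end Aux

theorem generalized_vandermonde_vanishing {K : Type*} [Field K] [CharZero K]
    (m n : ℕ) (α : Fin n → (Fin m → ℕ))
    (h : ∀ J : Fin n → (Fin m → ℕ), (∀ s : Fin n, (∑ k, J s k) ≤ (s : ℕ)) →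
      Matrix.det (Matrix.of fun i j : Fin n => ∏ k, (α j k : K) ^ (J i k)) = 0) :
    ¬ Function.Injective α := by
  intro hα
  obtain ⟨J, hJd, hJi⟩ := gv_greedy (K := K) α hα n le_rfl
  have hdet := h J hJd
  have hunit : IsUnit (Matrix.of fun i j : Fin n => ∏ k, (α j k : K) ^ (J i k)) := by
    rw [← Matrix.linearIndependent_rows_iff_isUnit]
    exact hJi
  have := ((Matrix.isUnit_iff_isUnit_det _).1 hunit).ne_zero
  exact this hdet
end

section
/- Let K be a field of characteristic zero. If f₁,...,fₙ ∈ K[[x₁,...,x_m]] are nonzero power series whose leading monomials (minimal nonzero monomials with respect to the lexicographic order on exponents) have pairwise distinct exponent vectors, then some generalized Wronskian of f₁,...,fₙ is nonzero, and for any choice of operators for which the generalized Wronskian W₀ of the leading monomials is nonzero, the leading monomial of the generalized Wronskian W of f₁,...,fₙ equals the leading monomial of W₀. -/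
/-- The formal partial differential operator `Δ = (∂/∂x₁)^{j₁} ⋯ (∂/∂x_m)^{j_m}`
on multivariate formal power series, associated to the multi-index `j`,
defined coefficientwise. -/
noncomputable def mvpsDiffOp {K : Type*} [CommSemiring K] {m : ℕ} (j : Fin m →₀ ℕ)
    (f : MvPowerSeries (Fin m) K) : MvPowerSeries (Fin m) K :=
  fun α => (∏ k : Fin m, ((α k + j k).descFactorial (j k) : K)) *
    MvPowerSeries.coeff (α + j) f

/-- `IsLexLeadingExp f α` means that the leading monomial of `f` (its minimal nonzero
monomial with respect to the lexicographic order on exponents) has exponent vector `α`. -/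
def IsLexLeadingExp {K : Type*} [CommSemiring K] {m : ℕ}
    (f : MvPowerSeries (Fin m) K) (α : Fin m →₀ ℕ) : Prop :=
  MvPowerSeries.coeff α f ≠ 0 ∧
    ∀ β : Fin m →₀ ℕ, MvPowerSeries.coeff β f ≠ 0 → toLex α ≤ toLex β

/-!
Multiplying the `i`-th row of the Wronskian matrix by `x^Δᵢ` turns `∂^Δᵢ` into the diagonal
operator `x^a ↦ [a]_Δᵢ x^a`, where `[a]_δ = ∏ₖ aₖ (aₖ - 1) ⋯ (aₖ - δₖ + 1)` (`descFactorialProd`).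
Diagonal operators do not lower the lex order and the lex order is additive, so every term of the
determinant has lex order at least `∑ αⱼ`, and the coefficient of `x^(∑ αⱼ)` is
`det ([αⱼ]_Δᵢ) * ∏ cⱼ`, both for the `fⱼ` and for their leading monomials `cⱼ x^αⱼ`; for the
monomials it is the only term. So once the monomial Wronskian is nonzero, the two Wronskians have
the same leading term.

For nonvanishing, multiplication by `aₖ` maps the span of the vectors `([αⱼ]_δ)ⱼ` with `|δ| ≤ s`
into the one with `|δ| ≤ s + 1`, since `aₖ [a]_δ = [a]_(δ + eₖ) + δₖ [a]_δ`. Hence that span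
contains the Vandermonde vectors `(L(αⱼ)^t)ⱼ`, `t ≤ s`, of a linear form `L` separating the `αⱼ`,
and a greedy choice of `Δ₀, Δ₁, …` makes the matrix `([αⱼ]_Δᵢ)` invertible.
-/

namespace MvPowerSeries

variable {σ R ι : Type*}

section LexOrder

variable [LinearOrder σ] [WellFoundedGT σ]

theorem lexOrder_eq_of_coeff_ne_zero [Semiring R] {φ : MvPowerSeries σ R} {a : σ →₀ ℕ}
    (hle : toLex a ≤ lexOrder φ) (ha : coeff a φ ≠ 0) : lexOrder φ = toLex a :=
  le_antisymm (lexOrder_le_of_coeff_ne_zero ha) hle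

theorem coeff_add_mul_of_le_lexOrder [Semiring R] {φ ψ : MvPowerSeries σ R} {p q : σ →₀ ℕ}
    (hp : toLex p ≤ lexOrder φ) (hq : toLex q ≤ lexOrder ψ) :
    coeff (p + q) (φ * ψ) = coeff p φ * coeff q ψ := by
  rw [coeff_mul, Finset.sum_eq_single_of_mem ⟨p, q⟩ (by simp)]
  rintro ⟨u, v⟩ huv hne
  rw [Finset.HasAntidiagonal.mem_antidiagonal] at huv
  rcases trichotomy_of_add_eq_add (congrArg toLex huv) with h | h | h
  · exact absurd (by rw [toLex_inj.mp h.1, toLex_inj.mp h.2]) hne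
  · rw [coeff_eq_zero_of_lt_lexOrder (lt_of_lt_of_le (WithTop.coe_lt_coe.mpr h) hp), zero_mul]
  · rw [coeff_eq_zero_of_lt_lexOrder (lt_of_lt_of_le (WithTop.coe_lt_coe.mpr h) hq), mul_zero]

theorem lexOrder_monomial [Semiring R] (a : σ →₀ ℕ) {c : R} (hc : c ≠ 0) :
    lexOrder (monomial a c) = toLex a := by
  refine lexOrder_eq_of_coeff_ne_zero (le_lexOrder_iff.mpr fun d hd => ?_)
    (by rwa [coeff_monomial_same])
  rw [coeff_monomial, if_neg fun h => hd.ne (by rw [h])]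

theorem lexOrder_monomial_one_mul [Semiring R] [NoZeroDivisors R] [Nontrivial R] (a : σ →₀ ℕ)
    (φ : MvPowerSeries σ R) : lexOrder (monomial a 1 * φ) =
      ((toLex a : Lex (σ →₀ ℕ)) : WithTop (Lex (σ →₀ ℕ))) + lexOrder φ := by
  rw [lexOrder_mul, lexOrder_monomial a one_ne_zero]

theorem sum_le_lexOrder_prod [CommSemiring R] (s : Finset ι) {φ : ι → MvPowerSeries σ R}
    {a : ι → σ →₀ ℕ} (h : ∀ i ∈ s, toLex (a i) ≤ lexOrder (φ i)) :
    toLex (∑ i ∈ s, a i) ≤ lexOrder (∏ i ∈ s, φ i) := by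
  induction s using Finset.cons_induction with
  | empty => simp
  | cons i s hi ih =>
    rw [Finset.prod_cons, Finset.sum_cons, toLex_add, WithTop.coe_add]
    exact le_trans (add_le_add (h i (Finset.mem_cons_self i s))
      (ih fun j hj => h j (Finset.mem_cons_of_mem hj))) (le_lexOrder_mul _ _)

theorem coeff_sum_prod_of_le_lexOrder [CommSemiring R] (s : Finset ι)
    {φ : ι → MvPowerSeries σ R} {a : ι → σ →₀ ℕ}
    (h : ∀ i ∈ s, toLex (a i) ≤ lexOrder (φ i)) :
    coeff (∑ i ∈ s, a i) (∏ i ∈ s, φ i) = ∏ i ∈ s, coeff (a i) (φ i) := by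
  induction s using Finset.cons_induction with
  | empty => simp
  | cons i s hi ih =>
    have hs : ∀ j ∈ s, toLex (a j) ≤ lexOrder (φ j) := fun j hj =>
      h j (Finset.mem_cons_of_mem hj)
    rw [Finset.prod_cons, Finset.sum_cons, Finset.prod_cons,
      coeff_add_mul_of_le_lexOrder (h i (Finset.mem_cons_self i s)) (sum_le_lexOrder_prod s hs),
      ih hs]

variable [Fintype ι] [DecidableEq ι]

theorem sum_le_lexOrder_det [CommRing R] {M : Matrix ι ι (MvPowerSeries σ R)}
    {a : ι → σ →₀ ℕ} (h : ∀ i j, toLex (a j) ≤ lexOrder (M i j)) :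
    toLex (∑ j, a j) ≤ lexOrder M.det := by
  refine le_lexOrder_iff.mpr fun d hd => ?_
  rw [Matrix.det_apply, map_sum]
  refine Finset.sum_eq_zero fun τ _ => ?_
  rw [Units.smul_def, map_zsmul, coeff_eq_zero_of_lt_lexOrder
    (lt_of_lt_of_le hd (sum_le_lexOrder_prod _ fun j _ => h _ j)), smul_zero]

theorem coeff_sum_det_of_le_lexOrder [CommRing R] {M : Matrix ι ι (MvPowerSeries σ R)}
    {a : ι → σ →₀ ℕ} (h : ∀ i j, toLex (a j) ≤ lexOrder (M i j)) :
    coeff (∑ j, a j) M.det = (Matrix.of fun i j => coeff (a j) (M i j)).det := by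
  rw [Matrix.det_apply, Matrix.det_apply, map_sum]
  refine Finset.sum_congr rfl fun τ _ => ?_
  rw [Units.smul_def, Units.smul_def, map_zsmul,
    coeff_sum_prod_of_le_lexOrder _ fun j _ => h _ j]
  rfl

end LexOrder

theorem det_of_monomial [CommRing R] [Fintype ι] [DecidableEq ι] (a : ι → σ →₀ ℕ)
    (A : Matrix ι ι R) :
    (Matrix.of fun i j => monomial (a j) (A i j)).det = monomial (∑ j, a j) A.det := by
  have hA : (Matrix.of fun i j => monomial (a j) (A i j)) =
      Matrix.of fun i j => monomial (a j) 1 * (C.mapMatrix A) i j := by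
    ext1 i j
    simp only [Matrix.of_apply, RingHom.mapMatrix_apply, Matrix.map_apply,
      ← monomial_zero_eq_C_apply, monomial_mul_monomial, add_zero, one_mul]
  rw [hA, Matrix.det_mul_row, ← RingHom.map_det, prod_monomial, Finset.prod_const_one,
    ← monomial_zero_eq_C_apply, monomial_mul_monomial, add_zero, one_mul]

end MvPowerSeries

open MvPowerSeries

theorem isLexLeadingExp_iff {K : Type*} [CommSemiring K] {m : ℕ} {f : MvPowerSeries (Fin m) K}
    {α : Fin m →₀ ℕ} : IsLexLeadingExp f α ↔ lexOrder f = toLex α := by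
  refine ⟨fun ⟨hα, hmin⟩ =>
    lexOrder_eq_of_coeff_ne_zero (le_lexOrder_iff.mpr fun d hd => ?_) hα,
    fun h => ⟨coeff_ne_zero_of_lexOrder h.symm, fun β hβ =>
      WithTop.coe_le_coe.mp (h ▸ lexOrder_le_of_coeff_ne_zero hβ)⟩⟩
  by_contra hd0
  exact (WithTop.coe_lt_coe.mp hd).not_ge (hmin d hd0)

theorem Nat.mul_descFactorial (a b : ℕ) :
    a * a.descFactorial b = a.descFactorial (b + 1) + b * a.descFactorial b := by
  rw [Nat.descFactorial_succ, ← add_mul]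
  rcases le_or_gt b a with h | h
  · rw [Nat.sub_add_cancel h]
  · rw [Nat.descFactorial_eq_zero_iff_lt.mpr h, mul_zero, mul_zero]

def descFactorialProd {m : ℕ} (a δ : Fin m →₀ ℕ) : ℕ := ∏ k, (a k).descFactorial (δ k)

theorem descFactorialProd_eq_zero_of_not_le {m : ℕ} {a δ : Fin m →₀ ℕ} (h : ¬δ ≤ a) :
    descFactorialProd a δ = 0 := by
  obtain ⟨k, hk⟩ := not_forall.mp (mt Finsupp.le_def.mpr h)
  exact Finset.prod_eq_zero (Finset.mem_univ k)
    (Nat.descFactorial_eq_zero_iff_lt.mpr (not_le.mp hk))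

theorem mul_descFactorialProd {m : ℕ} (a δ : Fin m →₀ ℕ) (k : Fin m) :
    a k * descFactorialProd a δ =
      descFactorialProd a (δ + Finsupp.single k 1) + δ k * descFactorialProd a δ := by
  have hrest : ∏ i ∈ Finset.univ.erase k,
      (a i).descFactorial ((δ + Finsupp.single k 1 : Fin m →₀ ℕ) i) =
        ∏ i ∈ Finset.univ.erase k, (a i).descFactorial (δ i) :=
    Finset.prod_congr rfl fun i hi => by
      rw [Finsupp.add_apply, Finsupp.single_eq_of_ne (Finset.ne_of_mem_erase hi), add_zero]
  simp only [descFactorialProd]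
  rw [← Finset.mul_prod_erase _ _ (Finset.mem_univ k),
    ← Finset.mul_prod_erase _ _ (Finset.mem_univ k), hrest, Finsupp.add_apply,
    Finsupp.single_eq_same, ← mul_assoc, Nat.mul_descFactorial]
  ring

section DiffOp

variable {K : Type*} [CommSemiring K] {m : ℕ}

theorem coeff_monomial_mul_mvpsDiffOp (δ e : Fin m →₀ ℕ) (f : MvPowerSeries (Fin m) K) :
    coeff e (monomial δ 1 * mvpsDiffOp δ f) = descFactorialProd e δ * coeff e f := by
  rw [coeff_monomial_mul, one_mul]
  split_ifs with h
  · change _ * coeff (e - δ + δ) f = _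
    simp only [← Finsupp.add_apply, tsub_add_cancel_of_le h, descFactorialProd, Nat.cast_prod]
  · rw [descFactorialProd_eq_zero_of_not_le h, Nat.cast_zero, zero_mul]

theorem lexOrder_le_lexOrder_monomial_mul_mvpsDiffOp (δ : Fin m →₀ ℕ)
    (f : MvPowerSeries (Fin m) K) :
    lexOrder f ≤ lexOrder (monomial δ 1 * mvpsDiffOp δ f) :=
  le_lexOrder_iff.mpr fun d hd => by
    rw [coeff_monomial_mul_mvpsDiffOp, coeff_eq_zero_of_lt_lexOrder hd, mul_zero]

theorem monomial_mul_mvpsDiffOp_monomial (δ a : Fin m →₀ ℕ) (c : K) :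
    monomial δ 1 * mvpsDiffOp δ (monomial a c) = monomial a (descFactorialProd a δ * c) := by
  ext e
  rw [coeff_monomial_mul_mvpsDiffOp, coeff_monomial, coeff_monomial]
  split_ifs with h
  · rw [h]
  · rw [mul_zero]

end DiffOp

theorem exists_linearIndependent_mem_of_mem_span {K V : Type*} [DivisionRing K] [AddCommGroup V]
    [Module K V] {G : ℕ → Set V} (hG : Monotone G) :
    ∀ {n : ℕ} (u : Fin n → V), LinearIndependent K u →
      (∀ t : Fin n, u t ∈ Submodule.span K (G t)) →
      ∃ v : Fin n → V, (∀ i : Fin n, v i ∈ G i) ∧ LinearIndependent K v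
  | 0, _, _, _ => ⟨Fin.elim0, fun i => i.elim0, linearIndependent_empty_type⟩
  | n + 1, u, hu, huG => by
    classical
    obtain ⟨v, hvG, hv⟩ := exists_linearIndependent_mem_of_mem_span hG (u ∘ Fin.castSucc)
      (hu.comp _ (Fin.castSucc_injective n)) fun t => by simpa using huG t.castSucc
    obtain ⟨w, hwG, hw⟩ : ∃ w ∈ G n, w ∉ Submodule.span K (Set.range v) := by
      by_contra! hGv
      have hu_span : Set.range u ≤ Submodule.span K (Set.range v) := by
        rintro _ ⟨t, rfl⟩
        exact Submodule.span_le.mpr hGv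
          (Submodule.span_mono (hG (Nat.lt_succ_iff.mp t.isLt)) (huG t))
      have := (linearIndependent_le_span_aux' u hu _ hu_span).trans (Fintype.card_range_le v)
      simp at this
    refine ⟨Fin.snoc v w, fun i => ?_, linearIndependent_finSnoc.mpr ⟨hv, hw⟩⟩
    cases i using Fin.lastCases with
    | last => simpa using hwG
    | cast i => simpa using hvG i

section DescFactorialRows

open Submodule

variable (K : Type*) [Field K] {m n : ℕ} (α : Fin n → (Fin m →₀ ℕ))

def descFactorialRows (s : ℕ) : Set (Fin n → K) :=
  (fun δ j => (descFactorialProd (α j) δ : K)) '' {δ | δ.degree ≤ s}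

theorem descFactorialRows_mono : Monotone (descFactorialRows K α) :=
  fun _ _ hst => Set.image_mono fun _ hδ => le_trans hδ hst

theorem mul_mem_span_descFactorialRows (k : Fin m) {s : ℕ} {w : Fin n → K}
    (hw : w ∈ span K (descFactorialRows K α s)) :
    (fun j => (α j k : K)) * w ∈ span K (descFactorialRows K α (s + 1)) := by
  refine (span_le (p := (span K _).comap (LinearMap.mulLeft K fun j => (α j k : K)))).mpr
    ?_ hw
  rintro _ ⟨δ, hδ, rfl⟩
  have hmul : (fun j => (α j k : K)) * (fun j => (descFactorialProd (α j) δ : K)) =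
      (fun j => (descFactorialProd (α j) (δ + Finsupp.single k 1) : K)) +
        (δ k : K) • fun j => (descFactorialProd (α j) δ : K) := by
    ext j
    simpa using congrArg (Nat.cast : ℕ → K) (mul_descFactorialProd (α j) δ k)
  simp only [SetLike.mem_coe, mem_comap, LinearMap.mulLeft_apply, hmul]
  refine add_mem (subset_span ⟨_, ?_, rfl⟩) (smul_mem _ _ (subset_span ⟨δ, ?_, rfl⟩))
  · simpa using hδ
  · exact le_trans hδ (Nat.le_succ s)

theorem pow_mem_span_descFactorialRows (c : Fin m → K) (t : ℕ) :
    (fun j => ∑ k, c k * (α j k : K)) ^ t ∈ span K (descFactorialRows K α t) := by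
  induction t with
  | zero => exact subset_span ⟨0, by simp, by ext j; simp [descFactorialProd]⟩
  | succ t ih =>
    have hsum : (fun j => ∑ k, c k * (α j k : K)) = ∑ k, c k • fun j => (α j k : K) := by
      ext j
      simp
    rw [pow_succ']
    nth_rewrite 1 [hsum]
    rw [Finset.sum_mul]
    exact sum_mem fun k _ => by
      rw [smul_mul_assoc]
      exact smul_mem _ _ (mul_mem_span_descFactorialRows K α k ih)

end DescFactorialRows

theorem exists_injective_linearForm {K : Type*} [Field K] [CharZero K] {m n : ℕ}
    {α : Fin n → (Fin m →₀ ℕ)} (hα : Function.Injective α) :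
    ∃ c : Fin m → K, Function.Injective fun j => ∑ k, c k * (α j k : K) := by
  obtain ⟨N, hN⟩ := Finite.exists_le fun p : Fin n × Fin m => α p.1 p.2
  let digits : Fin n → Fin m → Fin (N + 1) := fun j k =>
    ⟨α j k, Nat.lt_succ_of_le (hN (j, k))⟩
  have hdigits : Function.Injective digits := fun j j' h =>
    hα (Finsupp.ext fun k => congrArg Fin.val (congrFun h k))
  refine ⟨fun k => ((N + 1) ^ (k : ℕ) : ℕ), fun j j' h =>
    hdigits (finFunctionFinEquiv.injective (Fin.val_injective (Nat.cast_injective (R := K) ?_)))⟩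
  simpa [finFunctionFinEquiv_apply, digits, mul_comm] using h

def descFactorialMatrix {K : Type*} [CommRing K] {m n : ℕ}
    (Δ α : Fin n → (Fin m →₀ ℕ)) : Matrix (Fin n) (Fin n) K :=
  Matrix.of fun i j => (descFactorialProd (α j) (Δ i) : K)

theorem exists_det_descFactorialMatrix_ne_zero {K : Type*} [Field K] [CharZero K] {m n : ℕ}
    {α : Fin n → (Fin m →₀ ℕ)} (hα : Function.Injective α) :
    ∃ Δ : Fin n → (Fin m →₀ ℕ), (∀ i, (Δ i).degree ≤ i) ∧
      (descFactorialMatrix Δ α : Matrix (Fin n) (Fin n) K).det ≠ 0 := by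
  obtain ⟨c, hc⟩ := exists_injective_linearForm (K := K) hα
  have hvdm := (Matrix.linearIndependent_cols_iff_isUnit.mpr
    ((Matrix.isUnit_iff_isUnit_det _).mpr (Matrix.det_vandermonde_ne_zero_iff.mpr hc).isUnit))
  obtain ⟨r, hr, hrind⟩ := exists_linearIndependent_mem_of_mem_span
    (descFactorialRows_mono K α) _ hvdm fun t => pow_mem_span_descFactorialRows K α c t
  choose Δ hΔ hrΔ using hr
  have hrows : (descFactorialMatrix Δ α : Matrix (Fin n) (Fin n) K).row = r := funext hrΔ
  refine ⟨Δ, hΔ, ((Matrix.isUnit_iff_isUnit_det _).mp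
    (Matrix.linearIndependent_rows_iff_isUnit.mp (hrows ▸ hrind))).ne_zero⟩

section Wronskian

variable {K : Type*} [CommRing K] {m n : ℕ}

noncomputable def genWronskian (Δ : Fin n → (Fin m →₀ ℕ))
    (f : Fin n → MvPowerSeries (Fin m) K) : MvPowerSeries (Fin m) K :=
  (Matrix.of fun i j => mvpsDiffOp (Δ i) (f j)).det

variable (Δ : Fin n → (Fin m →₀ ℕ))

theorem monomial_sum_mul_genWronskian (f : Fin n → MvPowerSeries (Fin m) K) :
    monomial (∑ i, Δ i) 1 * genWronskian Δ f =
      (Matrix.of fun i j => monomial (Δ i) 1 * mvpsDiffOp (Δ i) (f j)).det := by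
  have h := Matrix.det_mul_column (fun i => monomial (Δ i) (1 : K))
    (Matrix.of fun i j => mvpsDiffOp (Δ i) (f j))
  simp only [Matrix.of_apply] at h
  rw [h, prod_monomial, Finset.prod_const_one, genWronskian]

variable {f : Fin n → MvPowerSeries (Fin m) K} {α : Fin n → (Fin m →₀ ℕ)}

theorem sum_le_lexOrder_monomial_sum_mul_genWronskian
    (hf : ∀ j, toLex (α j) ≤ lexOrder (f j)) :
    ((toLex (∑ j, α j) : Lex (Fin m →₀ ℕ)) : WithTop (Lex (Fin m →₀ ℕ))) ≤
      lexOrder (monomial (∑ i, Δ i) 1 * genWronskian Δ f) := by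
  rw [monomial_sum_mul_genWronskian]
  exact sum_le_lexOrder_det fun i j =>
    (hf j).trans (lexOrder_le_lexOrder_monomial_mul_mvpsDiffOp _ _)

theorem coeff_sum_monomial_sum_mul_genWronskian (hf : ∀ j, toLex (α j) ≤ lexOrder (f j)) :
    coeff (∑ j, α j) (monomial (∑ i, Δ i) 1 * genWronskian Δ f) =
      (descFactorialMatrix Δ α).det * ∏ j, coeff (α j) (f j) := by
  rw [monomial_sum_mul_genWronskian,
    coeff_sum_det_of_le_lexOrder
      (M := Matrix.of fun i j => monomial (Δ i) 1 * mvpsDiffOp (Δ i) (f j))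
      fun i j => (hf j).trans (lexOrder_le_lexOrder_monomial_mul_mvpsDiffOp _ _),
    mul_comm, ← Matrix.det_mul_row]
  congr 1
  ext i j
  rw [Matrix.of_apply, Matrix.of_apply, coeff_monomial_mul_mvpsDiffOp, mul_comm]
  rfl

theorem monomial_sum_mul_genWronskian_monomial (α : Fin n → (Fin m →₀ ℕ))
    (c : Fin n → K) :
    monomial (∑ i, Δ i) 1 * genWronskian Δ (fun j => monomial (α j) (c j)) =
      monomial (∑ j, α j) ((descFactorialMatrix Δ α).det * ∏ j, c j) := by
  rw [monomial_sum_mul_genWronskian]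
  simp only [monomial_mul_mvpsDiffOp_monomial]
  have h := det_of_monomial α
    (Matrix.of fun i j => (descFactorialProd (α j) (Δ i) : K) * c j)
  simp only [Matrix.of_apply] at h
  rw [h, mul_comm, ← Matrix.det_mul_row]
  simp only [descFactorialMatrix, Matrix.of_apply, mul_comm]

end Wronskian

section LeadingTerm

variable {K : Type*} [Field K] {m n : ℕ} (Δ : Fin n → (Fin m →₀ ℕ))
  {f : Fin n → MvPowerSeries (Fin m) K} {α : Fin n → (Fin m →₀ ℕ)}

theorem lexOrder_monomial_sum_mul_genWronskian (hf : ∀ j, lexOrder (f j) = toLex (α j))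
    (hdet : (descFactorialMatrix Δ α : Matrix (Fin n) (Fin n) K).det ≠ 0) :
    lexOrder (monomial (∑ i, Δ i) 1 * genWronskian Δ f) = toLex (∑ j, α j) := by
  refine lexOrder_eq_of_coeff_ne_zero
    (sum_le_lexOrder_monomial_sum_mul_genWronskian Δ fun j => (hf j).ge) ?_
  rw [coeff_sum_monomial_sum_mul_genWronskian Δ fun j => (hf j).ge]
  exact mul_ne_zero hdet
    (Finset.prod_ne_zero_iff.mpr fun j _ => coeff_ne_zero_of_lexOrder (hf j).symm)

theorem genWronskian_ne_zero (hf : ∀ j, lexOrder (f j) = toLex (α j))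
    (hdet : (descFactorialMatrix Δ α : Matrix (Fin n) (Fin n) K).det ≠ 0) :
    genWronskian Δ f ≠ 0 := by
  intro h
  have := lexOrder_monomial_sum_mul_genWronskian Δ hf hdet
  rw [h, mul_zero, lexOrder_zero] at this
  exact WithTop.top_ne_coe this

theorem leadingTerm_genWronskian_eq_of_monomials (hf : ∀ j, lexOrder (f j) = toLex (α j))
    {γ : Fin m →₀ ℕ}
    (hγ : lexOrder (genWronskian Δ fun j => monomial (α j) (coeff (α j) (f j))) = toLex γ) :
    lexOrder (genWronskian Δ f) = toLex γ ∧
      coeff γ (genWronskian Δ f) =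
        coeff γ (genWronskian Δ fun j => monomial (α j) (coeff (α j) (f j))) := by
  set g : Fin n → MvPowerSeries (Fin m) K := fun j => monomial (α j) (coeff (α j) (f j))
  have hg : ∀ j, lexOrder (g j) = toLex (α j) := fun j =>
    lexOrder_monomial _ (coeff_ne_zero_of_lexOrder (hf j).symm)
  have hXg := lexOrder_monomial_one_mul (∑ i, Δ i) (genWronskian Δ g)
  rw [hγ] at hXg
  have hdet : (descFactorialMatrix Δ α : Matrix (Fin n) (Fin n) K).det ≠ 0 := by
    intro h0
    rw [monomial_sum_mul_genWronskian_monomial, h0, zero_mul, map_zero, lexOrder_zero] at hXg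
    exact WithTop.top_ne_coe hXg
  have hsum : ∑ i, Δ i + γ = ∑ j, α j := by
    rw [lexOrder_monomial_sum_mul_genWronskian Δ hg hdet] at hXg
    exact toLex_inj.mp (WithTop.coe_injective hXg).symm
  have hW : lexOrder (genWronskian Δ f) = toLex γ := by
    have h := lexOrder_monomial_one_mul (∑ i, Δ i) (genWronskian Δ f)
    rw [lexOrder_monomial_sum_mul_genWronskian Δ hf hdet, ← hsum, toLex_add,
      WithTop.coe_add] at h
    exact (WithTop.add_left_cancel WithTop.coe_ne_top h).symm
  have hshift : ∀ φ : MvPowerSeries (Fin m) K,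
      coeff γ φ = coeff (∑ j, α j) (monomial (∑ i, Δ i) 1 * φ) := fun φ => by
    rw [← hsum, coeff_add_monomial_mul, one_mul]
  refine ⟨hW, ?_⟩
  rw [hshift, hshift, coeff_sum_monomial_sum_mul_genWronskian Δ fun j => (hf j).ge,
    coeff_sum_monomial_sum_mul_genWronskian Δ fun j => (hg j).ge]
  simp only [g, coeff_monomial_same]

end LeadingTerm

theorem generalized_wronskian_of_distinct_leading_exponents {K : Type*} [Field K]
    [CharZero K] (m n : ℕ) (f : Fin n → MvPowerSeries (Fin m) K)
    (α : Fin n → (Fin m →₀ ℕ)) (hLM : ∀ i, IsLexLeadingExp (f i) (α i))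
    (hα : Function.Injective α) :
    (∃ Δ : Fin n → (Fin m →₀ ℕ),
      (∀ s : Fin n, ((Δ s).sum fun _ e => e) ≤ (s : ℕ)) ∧
      Matrix.det (Matrix.of fun i j : Fin n => mvpsDiffOp (Δ i) (f j)) ≠ 0) ∧
    ∀ Δ : Fin n → (Fin m →₀ ℕ),
      (∀ s : Fin n, ((Δ s).sum fun _ e => e) ≤ (s : ℕ)) →
      ∀ γ : Fin m →₀ ℕ,
        IsLexLeadingExp (Matrix.det (Matrix.of fun i j : Fin n => mvpsDiffOp (Δ i)
          (MvPowerSeries.monomial (α j) (MvPowerSeries.coeff (α j) (f j))))) γ →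
        IsLexLeadingExp (Matrix.det (Matrix.of fun i j : Fin n =>
            mvpsDiffOp (Δ i) (f j))) γ ∧
          MvPowerSeries.coeff γ
              (Matrix.det (Matrix.of fun i j : Fin n => mvpsDiffOp (Δ i) (f j))) =
            MvPowerSeries.coeff γ
              (Matrix.det (Matrix.of fun i j : Fin n => mvpsDiffOp (Δ i)
                (MvPowerSeries.monomial (α j) (MvPowerSeries.coeff (α j) (f j))))) := by
  have hf : ∀ j, lexOrder (f j) = toLex (α j) := fun j => isLexLeadingExp_iff.mp (hLM j)
  refine ⟨?_, fun Δ _ γ hγ => ?_⟩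
  · obtain ⟨Δ, hΔ, hdet⟩ := exists_det_descFactorialMatrix_ne_zero (K := K) hα
    exact ⟨Δ, hΔ, genWronskian_ne_zero Δ hf hdet⟩
  · obtain ⟨hW, hcoeff⟩ :=
      leadingTerm_genWronskian_eq_of_monomials Δ hf (isLexLeadingExp_iff.mp hγ)
    exact ⟨isLexLeadingExp_iff.mpr hW, hcoeff⟩
end
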